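/- arXiv:2209.14802 — 2 statements merged into one kernel-verified Lean document; each statement's English description precedes it below -/
import Mathlib

section
/- Let (G, T) be a facet inducing Steiner graph with facet weights c, and let w ∈ V(G) \ T be a non-terminal vertex with exactly two neighbors u and v. Then c(uw) = c(vw) and u, v are not adjacent in G. -/
open Classical

/-- Two sets intersect if `A ∩ B`, `A \ B`, `B \ A` are all nonempty. -/
def Intersecting {V : Type*} (A B : Set V) : Prop :=
  (A ∩ B).Nonempty ∧ (A \ B).Nonempty ∧ (B \ A).Nonempty

/-- The edge `e` belongs to the cut `δ(S)`. -/
def InCut {V : Type*} (S : Set V) (e : Sym2 V) : Prop :=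
  ∃ u v : V, e = s(u, v) ∧ u ∈ S ∧ v ∉ S

/-- `δ(S)` is a `T`-Steiner cut iff `T ∩ S ≠ ∅` and `T \ S ≠ ∅`. -/
def IsSteinerCut {V : Type*} (T S : Set V) : Prop :=
  (T ∩ S).Nonempty ∧ (T \ S).Nonempty

/-- The incidence vector of `δ(S)` in `ℝ^{E(G)}`. -/
noncomputable def chi {V : Type*} (G : SimpleGraph V) (S : Set V) : ↥G.edgeSet → ℝ :=
  fun e => if InCut S e.val then 1 else 0

/-- The `c`-weight of the cut `δ(S)` in `G`. -/
noncomputable def cutWeight {V : Type*} [Fintype V] [DecidableEq V] (G : SimpleGraph V)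
    (c : Sym2 V → ℤ) (S : Set V) : ℤ :=
  ∑ e ∈ G.edgeFinset, if InCut S e then c e else 0

/-- `δ(S)` is a root of `c`: a minimum `c`-weight `T`-Steiner cut in `G`. -/
def IsRoot {V : Type*} [Fintype V] [DecidableEq V] (G : SimpleGraph V) (T : Set V)
    (c : Sym2 V → ℤ) (S : Set V) : Prop :=
  IsSteinerCut T S ∧ ∀ S' : Set V, IsSteinerCut T S' → cutWeight G c S ≤ cutWeight G c S'

/-- `c` are facet weights for `(G, T)`: strictly positive on edges, in minimum integer
form, and the incidence vectors of the roots span `ℝ^{E(G)}`. -/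
def FacetWeights {V : Type*} [Fintype V] [DecidableEq V] (G : SimpleGraph V) (T : Set V)
    (c : Sym2 V → ℤ) : Prop :=
  (∀ e ∈ G.edgeSet, 0 < c e) ∧
  (∀ d : ℤ, (∀ e ∈ G.edgeSet, d ∣ c e) → IsUnit d) ∧
  Submodule.span ℝ (chi G '' {S : Set V | IsRoot G T c S}) = ⊤

lemma inCut_iff {V : Type*} (S : Set V) (a b : V) :
    InCut S s(a,b) ↔ (a ∈ S ∧ b ∉ S) ∨ (b ∈ S ∧ a ∉ S) := by
  constructor
  · rintro ⟨x, y, hxy, hx, hy⟩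
    rw [Sym2.eq_iff] at hxy
    rcases hxy with ⟨rfl, rfl⟩ | ⟨rfl, rfl⟩
    · exact Or.inl ⟨hx, hy⟩
    · exact Or.inr ⟨hx, hy⟩
  · rintro (⟨ha, hb⟩ | ⟨hb, ha⟩)
    · exact ⟨a, b, rfl, ha, hb⟩
    · exact ⟨b, a, Sym2.eq_swap.symm, hb, ha⟩

lemma edge_ne_edge {V : Type*} {u v w : V} (huv : u ≠ v) : s(u,w) ≠ s(v,w) := by
  intro h
  rw [Sym2.eq_iff] at h
  rcases h with ⟨h1, _⟩ | ⟨h1, h2⟩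
  · exact huv h1
  · exact huv (h1.trans h2)

lemma cutWeight_diff {V : Type*} [Fintype V] [DecidableEq V] (G : SimpleGraph V)
    (c : Sym2 V → ℤ) (S S' : Set V) (w u v : V) (huv : u ≠ v)
    (hu : G.Adj u w) (hv : G.Adj v w) (hnbr : G.neighborSet w = {u, v})
    (hagree : ∀ x, x ≠ w → (x ∈ S ↔ x ∈ S')) :
    cutWeight G c S - cutWeight G c S' =
      ((if InCut S s(u,w) then c s(u,w) else 0) - (if InCut S' s(u,w) then c s(u,w) else 0))
      + ((if InCut S s(v,w) then c s(v,w) else 0) - (if InCut S' s(v,w) then c s(v,w) else 0)) := by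
  unfold cutWeight
  rw [← Finset.sum_sub_distrib]
  have hmem1 : s(u,w) ∈ G.edgeFinset := by
    rw [SimpleGraph.mem_edgeFinset, SimpleGraph.mem_edgeSet]; exact hu
  have hmem2 : s(v,w) ∈ G.edgeFinset := by
    rw [SimpleGraph.mem_edgeFinset, SimpleGraph.mem_edgeSet]; exact hv
  have hsub : ({s(u,w), s(v,w)} : Finset (Sym2 V)) ⊆ G.edgeFinset := by
    intro e he
    rcases Finset.mem_insert.mp he with rfl | he
    · exact hmem1
    · rw [Finset.mem_singleton] at he; subst he; exact hmem2
  rw [← Finset.sum_subset hsub ?_, Finset.sum_pair (edge_ne_edge huv)]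
  intro e he hne
  induction e using Sym2.ind with
  | _ a b =>
    rw [SimpleGraph.mem_edgeFinset, SimpleGraph.mem_edgeSet] at he
    have hna : a ≠ w := by
      rintro rfl
      have hb : b ∈ G.neighborSet a := he
      rw [hnbr] at hb
      rcases hb with rfl | hb
      · exact hne (by rw [Finset.mem_insert]; left; exact Sym2.eq_swap)
      · rw [Set.mem_singleton_iff] at hb; subst hb
        exact hne (by
          rw [Finset.mem_insert, Finset.mem_singleton]; right; exact Sym2.eq_swap)
    have hnb : b ≠ w := by
      rintro rfl
      have ha : a ∈ G.neighborSet b := he.symm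
      rw [hnbr] at ha
      rcases ha with rfl | ha
      · exact hne (by rw [Finset.mem_insert]; left; rfl)
      · rw [Set.mem_singleton_iff] at ha; subst ha
        exact hne (by rw [Finset.mem_insert, Finset.mem_singleton]; right; rfl)
    have : InCut S s(a,b) ↔ InCut S' s(a,b) := by
      rw [inCut_iff, inCut_iff, hagree a hna, hagree b hnb]
    rw [if_congr this rfl rfl, sub_self]

lemma flip_ineq {V : Type*} [Fintype V] [DecidableEq V] (G : SimpleGraph V) (T : Set V)
    (c : Sym2 V → ℤ) (S : Set V) (hroot : IsRoot G T c S)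
    (w u v : V) (hw : w ∉ T) (huv : u ≠ v)
    (hu : G.Adj u w) (hv : G.Adj v w) (hnbr : G.neighborSet w = {u, v}) :
    (if InCut S s(u,w) then (c s(u,w) : ℤ) else -c s(u,w))
      + (if InCut S s(v,w) then c s(v,w) else -c s(v,w)) ≤ 0 := by
  set S' : Set V := if w ∈ S then S \ {w} else insert w S with hS'def
  have hagree : ∀ x, x ≠ w → (x ∈ S ↔ x ∈ S') := by
    intro x hx
    by_cases hws : w ∈ S <;> simp [hS'def, hws, hx]
  have hwS' : w ∈ S' ↔ w ∉ S := by
    by_cases hws : w ∈ S <;> simp [hS'def, hws]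
  have hSteiner : IsSteinerCut T S' := by
    obtain ⟨⟨t1, ht1T, ht1S⟩, ⟨t2, ht2T, ht2S⟩⟩ := hroot.1
    refine ⟨⟨t1, ht1T, ?_⟩, ⟨t2, ht2T, ?_⟩⟩
    · exact (hagree t1 (fun h => hw (h ▸ ht1T))).mp ht1S
    · exact fun h => ht2S ((hagree t2 (fun h' => hw (h' ▸ ht2T))).mpr h)
  have hle := hroot.2 S' hSteiner
  have hdiff := cutWeight_diff G c S S' w u v huv hu hv hnbr hagree
  have hnegu : InCut S' s(u,w) ↔ ¬ InCut S s(u,w) := by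
    have h1 := hagree u (G.ne_of_adj hu)
    rw [inCut_iff, inCut_iff]
    by_cases hws : w ∈ S
    · have := hwS'; tauto
    · have := hwS'; tauto
  have hnegv : InCut S' s(v,w) ↔ ¬ InCut S s(v,w) := by
    have h1 := hagree v (G.ne_of_adj hv)
    rw [inCut_iff, inCut_iff]
    by_cases hws : w ∈ S
    · have := hwS'; tauto
    · have := hwS'; tauto
  by_cases hP : InCut S s(u,w) <;> by_cases hQ : InCut S s(v,w) <;>
    simp [hP, hQ, hnegu, hnegv] at hdiff ⊢ <;> linarith

lemma no_root_misses_edge {V : Type*} [Fintype V] [DecidableEq V]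
    (G : SimpleGraph V) (T : Set V) (c : Sym2 V → ℤ) (hfw : FacetWeights G T c)
    (e0 : ↥G.edgeSet) (hmiss : ∀ S : Set V, IsRoot G T c S → ¬ InCut S e0.val) :
    False := by
  set f : (↥G.edgeSet → ℝ) →ₗ[ℝ] ℝ := LinearMap.proj e0 with hf
  have hker : Submodule.span ℝ (chi G '' {S : Set V | IsRoot G T c S}) ≤ LinearMap.ker f := by
    rw [Submodule.span_le]
    rintro x ⟨S, hS, rfl⟩
    simp only [SetLike.mem_coe, LinearMap.mem_ker, hf, LinearMap.proj_apply]
    simp [chi, hmiss S hS]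
  rw [hfw.2.2, top_le_iff, LinearMap.ker_eq_top] at hker
  have h1 : f (Pi.single e0 (1:ℝ)) = 1 := by
    simp [hf]
  rw [hker] at h1
  simp at h1

lemma part1_aux {V : Type*} [Fintype V] [DecidableEq V]
    (G : SimpleGraph V) (T : Set V) (c : Sym2 V → ℤ) (hfw : FacetWeights G T c)
    (w : V) (hw : w ∉ T) (u v : V) (huv : u ≠ v)
    (hnbr : G.neighborSet w = {u, v}) (hlt : c s(u,w) < c s(v,w)) : False := by
  have hu : G.Adj u w := by
    have : u ∈ G.neighborSet w := by rw [hnbr]; left; rfl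
    exact this.symm
  have hv : G.Adj v w := by
    have : v ∈ G.neighborSet w := by rw [hnbr]; right; rfl
    exact this.symm
  have ha : 0 < c s(u,w) := hfw.1 _ (G.mem_edgeSet.mpr hu)
  have hb : 0 < c s(v,w) := hfw.1 _ (G.mem_edgeSet.mpr hv)
  refine no_root_misses_edge G T c hfw ⟨s(v,w), G.mem_edgeSet.mpr hv⟩ ?_
  intro S hS hQ
  have := flip_ineq G T c S hS w u v hw huv hu hv hnbr
  by_cases hP : InCut S s(u,w) <;> simp [hP, hQ] at this <;> linarith

/-- In a facet inducing Steiner graph `(G, T)` with facet weights `c`, a non-terminal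
vertex `w` with exactly two neighbors `u`, `v` satisfies `c(uw) = c(vw)`, and `u`, `v`
are not adjacent. -/
theorem degree_two_nonterminal {V : Type*} [Fintype V] [DecidableEq V]
    (G : SimpleGraph V) (hconn : G.Connected) (T : Set V) (hT : 2 ≤ T.ncard)
    (c : Sym2 V → ℤ) (hfw : FacetWeights G T c)
    (w : V) (hw : w ∉ T) (u v : V) (huv : u ≠ v)
    (hnbr : G.neighborSet w = {u, v}) :
    c s(u, w) = c s(v, w) ∧ ¬ G.Adj u v := by
  have hu : G.Adj u w := by
    have : u ∈ G.neighborSet w := by rw [hnbr]; left; rfl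
    exact this.symm
  have hv : G.Adj v w := by
    have : v ∈ G.neighborSet w := by rw [hnbr]; right; rfl
    exact this.symm
  have heq : c s(u,w) = c s(v,w) := by
    rcases lt_trichotomy (c s(u,w)) (c s(v,w)) with hlt | heq | hgt
    · exact (part1_aux G T c hfw w hw u v huv hnbr hlt).elim
    · exact heq
    · have hnbr' : G.neighborSet w = {v, u} := by rw [hnbr, Set.pair_comm]
      exact (part1_aux G T c hfw w hw v u huv.symm hnbr' hgt).elim
  refine ⟨heq, fun hadj => ?_⟩
  have ha : 0 < c s(u,w) := hfw.1 _ (G.mem_edgeSet.mpr hu)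
  have hb : 0 < c s(v,w) := hfw.1 _ (G.mem_edgeSet.mpr hv)
  set e1 : ↥G.edgeSet := ⟨s(u,w), G.mem_edgeSet.mpr hu⟩ with he1
  set e2 : ↥G.edgeSet := ⟨s(v,w), G.mem_edgeSet.mpr hv⟩ with he2
  set e3 : ↥G.edgeSet := ⟨s(u,v), G.mem_edgeSet.mpr hadj⟩ with he3
  set f : (↥G.edgeSet → ℝ) →ₗ[ℝ] ℝ :=
    (LinearMap.proj e1 : (↥G.edgeSet → ℝ) →ₗ[ℝ] ℝ)
      + (LinearMap.proj e2 : (↥G.edgeSet → ℝ) →ₗ[ℝ] ℝ)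
      - (LinearMap.proj e3 : (↥G.edgeSet → ℝ) →ₗ[ℝ] ℝ) with hf
  have hker : Submodule.span ℝ (chi G '' {S : Set V | IsRoot G T c S}) ≤ LinearMap.ker f := by
    rw [Submodule.span_le]
    rintro x ⟨S, hS, rfl⟩
    simp only [SetLike.mem_coe, LinearMap.mem_ker, hf, LinearMap.sub_apply,
      LinearMap.add_apply, LinearMap.proj_apply]
    have hflip := flip_ineq G T c S hS w u v hw huv hu hv hnbr
    have hPQ : ¬ (InCut S s(u,w) ∧ InCut S s(v,w)) := by
      rintro ⟨hP, hQ⟩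
      rw [heq] at hflip ha
      simp [hP, hQ] at hflip
      linarith
    have hR : InCut S s(u,v) ↔ (InCut S s(u,w) ∨ InCut S s(v,w)) := by
      rw [inCut_iff S u w, inCut_iff S v w] at hPQ
      rw [inCut_iff, inCut_iff, inCut_iff]
      tauto
    by_cases hP : InCut S s(u,w) <;> by_cases hQ : InCut S s(v,w)
    · exact absurd ⟨hP, hQ⟩ hPQ
    · simp [chi, he1, he2, he3, hP, hQ, hR]
    · simp [chi, he1, he2, he3, hP, hQ, hR]
    · simp [chi, he1, he2, he3, hP, hQ, hR]
  rw [hfw.2.2, top_le_iff, LinearMap.ker_eq_top] at hker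
  have hne13 : e1 ≠ e3 := by
    rw [he1, he3, ne_eq, Subtype.mk.injEq, Sym2.eq_iff]
    rintro (⟨-, h2⟩ | ⟨h1, -⟩)
    · exact (G.ne_of_adj hv) h2.symm
    · exact huv h1
  have hne23 : e2 ≠ e3 := by
    rw [he2, he3, ne_eq, Subtype.mk.injEq, Sym2.eq_iff]
    rintro (⟨h1, -⟩ | ⟨-, h2⟩)
    · exact huv h1.symm
    · exact (G.ne_of_adj hu) h2.symm
  have h0 : f (Pi.single e3 (1:ℝ)) = 0 := by rw [hker]; simp
  rw [hf] at h0
  simp only [LinearMap.sub_apply, LinearMap.add_apply, LinearMap.proj_apply,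
    Pi.single_eq_same, Pi.single_eq_of_ne hne13, Pi.single_eq_of_ne hne23] at h0
  norm_num at h0
end

section
/- Every irreducible facet inducing Steiner graph (G, T) with |T| ≥ 3 satisfies |E(G)| ≤ |V(G)| + |T| − 3. -/
open Classical

section Aux
set_option linter.unusedSectionVars false
variable {V : Type*} [Fintype V] [DecidableEq V]

lemma incut_iff (S : Set V) (u v : V) :
    InCut S s(u, v) ↔ (u ∈ S ∧ v ∉ S) ∨ (v ∈ S ∧ u ∉ S) := by
  constructor
  · rintro ⟨a, b, hab, ha, hb⟩
    rw [Sym2.eq_iff] at hab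
    rcases hab with ⟨h1, h2⟩ | ⟨h1, h2⟩
    · subst h1; subst h2; exact Or.inl ⟨ha, hb⟩
    · subst h1; subst h2; exact Or.inr ⟨ha, hb⟩
  · rintro (⟨h1, h2⟩ | ⟨h1, h2⟩)
    · exact ⟨u, v, rfl, h1, h2⟩
    · exact ⟨v, u, Sym2.eq_swap, h1, h2⟩

/-- edge between `X` and `Y` -/
def EdgeBtw (X Y : Set V) (e : Sym2 V) : Prop :=
  ∃ u v : V, e = s(u, v) ∧ u ∈ X ∧ v ∈ Y

lemma ebtw_iff (X Y : Set V) (u v : V) :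
    EdgeBtw X Y s(u, v) ↔ (u ∈ X ∧ v ∈ Y) ∨ (v ∈ X ∧ u ∈ Y) := by
  constructor
  · rintro ⟨a, b, hab, ha, hb⟩
    rw [Sym2.eq_iff] at hab
    rcases hab with ⟨h1, h2⟩ | ⟨h1, h2⟩
    · subst h1; subst h2; exact Or.inl ⟨ha, hb⟩
    · subst h1; subst h2; exact Or.inr ⟨ha, hb⟩
  · rintro (⟨h1, h2⟩ | ⟨h1, h2⟩)
    · exact ⟨u, v, rfl, h1, h2⟩
    · exact ⟨v, u, Sym2.eq_swap, h1, h2⟩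

lemma edge_id1 (A B : Set V) (e : Sym2 V) (x : ℤ) :
    (if InCut A e then x else 0) + (if InCut B e then x else 0) =
    (if InCut (A ∩ B) e then x else 0) + (if InCut (A ∪ B) e then x else 0) +
      2 * (if EdgeBtw (A \ B) (B \ A) e then x else 0) := by
  induction e using Sym2.inductionOn with
  | hf u v =>
    by_cases h1 : u ∈ A <;> by_cases h2 : u ∈ B <;> by_cases h3 : v ∈ A <;> by_cases h4 : v ∈ B <;>
      simp [incut_iff, ebtw_iff, h1, h2, h3, h4] <;> ring

lemma edge_id2 (A B : Set V) (e : Sym2 V) (x : ℤ) :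
    (if InCut A e then x else 0) + (if InCut B e then x else 0) =
    (if InCut (A \ B) e then x else 0) + (if InCut (B \ A) e then x else 0) +
      2 * (if EdgeBtw (A ∩ B) (A ∪ B)ᶜ e then x else 0) := by
  induction e using Sym2.inductionOn with
  | hf u v =>
    by_cases h1 : u ∈ A <;> by_cases h2 : u ∈ B <;> by_cases h3 : v ∈ A <;> by_cases h4 : v ∈ B <;>
      simp [incut_iff, ebtw_iff, h1, h2, h3, h4] <;> ring

lemma edge_id1R (A B : Set V) (e : Sym2 V) (hb : ¬ EdgeBtw (A \ B) (B \ A) e) :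
    (if InCut A e then (1:ℝ) else 0) + (if InCut B e then 1 else 0) =
    (if InCut (A ∩ B) e then 1 else 0) + (if InCut (A ∪ B) e then 1 else 0) := by
  induction e using Sym2.inductionOn with
  | hf u v =>
    by_cases h1 : u ∈ A <;> by_cases h2 : u ∈ B <;> by_cases h3 : v ∈ A <;> by_cases h4 : v ∈ B <;>
      simp_all [incut_iff, ebtw_iff, h1, h2, h3, h4]

lemma edge_id2R (A B : Set V) (e : Sym2 V) (hb : ¬ EdgeBtw (A ∩ B) (A ∪ B)ᶜ e) :
    (if InCut A e then (1:ℝ) else 0) + (if InCut B e then 1 else 0) =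
    (if InCut (A \ B) e then 1 else 0) + (if InCut (B \ A) e then 1 else 0) := by
  induction e using Sym2.inductionOn with
  | hf u v =>
    by_cases h1 : u ∈ A <;> by_cases h2 : u ∈ B <;> by_cases h3 : v ∈ A <;> by_cases h4 : v ∈ B <;>
      simp_all [incut_iff, ebtw_iff, h1, h2, h3, h4]

variable (G : SimpleGraph V) (T : Set V) (c : Sym2 V → ℤ)

/-- the total weight of "bad" edges -/
noncomputable def badWeight (X Y : Set V) : ℤ :=
  ∑ e ∈ G.edgeFinset, if EdgeBtw X Y e then c e else 0

lemma cutWeight_id1 (A B : Set V) :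
    cutWeight G c A + cutWeight G c B =
    cutWeight G c (A ∩ B) + cutWeight G c (A ∪ B) + 2 * badWeight G c (A \ B) (B \ A) := by
  unfold cutWeight badWeight
  rw [← Finset.sum_add_distrib, ← Finset.sum_add_distrib, Finset.mul_sum,
    ← Finset.sum_add_distrib]
  exact Finset.sum_congr rfl fun e _ => edge_id1 A B e (c e)

lemma cutWeight_id2 (A B : Set V) :
    cutWeight G c A + cutWeight G c B =
    cutWeight G c (A \ B) + cutWeight G c (B \ A) + 2 * badWeight G c (A ∩ B) (A ∪ B)ᶜ := by
  unfold cutWeight badWeight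
  rw [← Finset.sum_add_distrib, ← Finset.sum_add_distrib, Finset.mul_sum,
    ← Finset.sum_add_distrib]
  exact Finset.sum_congr rfl fun e _ => edge_id2 A B e (c e)

lemma badWeight_nonneg (hpos : ∀ e ∈ G.edgeSet, 0 < c e) (X Y : Set V) :
    0 ≤ badWeight G c X Y := by
  apply Finset.sum_nonneg
  intro e he
  rw [SimpleGraph.mem_edgeFinset] at he
  split
  · exact (hpos e he).le
  · exact le_refl 0

lemma incut_compl_iff (S : Set V) (e : Sym2 V) : InCut Sᶜ e ↔ InCut S e := by
  induction e using Sym2.inductionOn with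
  | hf u v =>
    rw [incut_iff, incut_iff]
    simp only [Set.mem_compl_iff, not_not]
    tauto

lemma cutWeight_compl (S : Set V) : cutWeight G c Sᶜ = cutWeight G c S := by
  unfold cutWeight
  exact Finset.sum_congr rfl fun e _ => by rw [incut_compl_iff]

lemma chi_compl (S : Set V) : chi G Sᶜ = chi G S := by
  funext e
  unfold chi
  rw [incut_compl_iff]

lemma steiner_compl {S : Set V} (h : IsSteinerCut T S) : IsSteinerCut T Sᶜ := by
  obtain ⟨h1, h2⟩ := h
  constructor
  · obtain ⟨x, hx⟩ := h2; exact ⟨x, hx.1, hx.2⟩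
  · obtain ⟨x, hx⟩ := h1; exact ⟨x, hx.1, fun h => h hx.2⟩

lemma isroot_compl {S : Set V} (h : IsRoot G T c S) : IsRoot G T c Sᶜ := by
  refine ⟨steiner_compl T h.1, fun S' hS' => ?_⟩
  rw [cutWeight_compl]
  exact h.2 S' hS'

/-- all roots have the same weight -/
lemma root_weight_eq {A B : Set V} (hA : IsRoot G T c A) (hB : IsRoot G T c B) :
    cutWeight G c A = cutWeight G c B :=
  le_antisymm (hA.2 B hB.1) (hB.2 A hA.1)

lemma no_bad_edges {X Y : Set V} (hpos : ∀ e ∈ G.edgeSet, 0 < c e)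
    (h0 : badWeight G c X Y = 0) : ∀ e ∈ G.edgeSet, ¬ EdgeBtw X Y e := by
  intro e he hb
  have hmem : e ∈ G.edgeFinset := SimpleGraph.mem_edgeFinset.2 he
  have := (Finset.sum_eq_zero_iff_of_nonneg (fun f hf => by
    rw [SimpleGraph.mem_edgeFinset] at hf
    split
    · exact (hpos f hf).le
    · exact le_refl 0)).1 h0 e hmem
  rw [if_pos hb] at this
  exact absurd this.symm (hpos e he).ne

/-- Case 1 uncrossing: `A ∩ B`, `A ∪ B`. -/
lemma uncross1 (hpos : ∀ e ∈ G.edgeSet, 0 < c e)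
    {A B : Set V} (hA : IsRoot G T c A) (hB : IsRoot G T c B)
    (hP : IsSteinerCut T (A ∩ B)) (hQ : IsSteinerCut T (A ∪ B)) :
    IsRoot G T c (A ∩ B) ∧ IsRoot G T c (A ∪ B) ∧
      chi G A + chi G B = chi G (A ∩ B) + chi G (A ∪ B) := by
  have hid := cutWeight_id1 G c A B
  have h1 : cutWeight G c A ≤ cutWeight G c (A ∩ B) := hA.2 _ hP
  have h2 : cutWeight G c A ≤ cutWeight G c (A ∪ B) := hA.2 _ hQ
  have hAB : cutWeight G c B = cutWeight G c A := root_weight_eq G T c hB hA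
  have hbw : 0 ≤ badWeight G c (A \ B) (B \ A) := badWeight_nonneg G c hpos _ _
  have heq1 : cutWeight G c (A ∩ B) = cutWeight G c A := by omega
  have heq2 : cutWeight G c (A ∪ B) = cutWeight G c A := by omega
  have hbw0 : badWeight G c (A \ B) (B \ A) = 0 := by omega
  refine ⟨⟨hP, fun S' hS' => heq1 ▸ hA.2 S' hS'⟩, ⟨hQ, fun S' hS' => heq2 ▸ hA.2 S' hS'⟩, ?_⟩
  funext e
  have := no_bad_edges G c hpos hbw0 e.val e.prop
  simp only [Pi.add_apply]
  exact edge_id1R A B e.val this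

/-- Case 2 uncrossing: `A \ B`, `B \ A`. -/
lemma uncross2 (hpos : ∀ e ∈ G.edgeSet, 0 < c e)
    {A B : Set V} (hA : IsRoot G T c A) (hB : IsRoot G T c B)
    (hP : IsSteinerCut T (A \ B)) (hQ : IsSteinerCut T (B \ A)) :
    IsRoot G T c (A \ B) ∧ IsRoot G T c (B \ A) ∧
      chi G A + chi G B = chi G (A \ B) + chi G (B \ A) := by
  have hid := cutWeight_id2 G c A B
  have h1 : cutWeight G c A ≤ cutWeight G c (A \ B) := hA.2 _ hP
  have h2 : cutWeight G c A ≤ cutWeight G c (B \ A) := hA.2 _ hQ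
  have hAB : cutWeight G c B = cutWeight G c A := root_weight_eq G T c hB hA
  have hbw : 0 ≤ badWeight G c (A ∩ B) (A ∪ B)ᶜ := badWeight_nonneg G c hpos _ _
  have heq1 : cutWeight G c (A \ B) = cutWeight G c A := by omega
  have heq2 : cutWeight G c (B \ A) = cutWeight G c A := by omega
  have hbw0 : badWeight G c (A ∩ B) (A ∪ B)ᶜ = 0 := by omega
  refine ⟨⟨hP, fun S' hS' => heq1 ▸ hA.2 S' hS'⟩, ⟨hQ, fun S' hS' => heq2 ▸ hA.2 S' hS'⟩, ?_⟩
  funext e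
  have := no_bad_edges G c hpos hbw0 e.val e.prop
  simp only [Pi.add_apply]
  exact edge_id2R A B e.val this

/-- laminarity relation -/
def LamRel {V : Type*} (A B : Set V) : Prop := A ⊆ B ∨ B ⊆ A ∨ A ∩ B = ∅

lemma not_intersecting_iff {A B : Set V} : ¬ Intersecting A B ↔ LamRel A B := by
  unfold Intersecting LamRel
  rw [not_and_or, not_and_or]
  simp only [Set.not_nonempty_iff_eq_empty, Set.diff_eq_empty]
  tauto

lemma cross_transfer1 {A S0 S : Set V} (hrel : LamRel S S0) (hx : Intersecting A S0)
    (h : Intersecting (A ∩ S0) S) : Intersecting A S := by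
  obtain ⟨⟨x, hx1, hx2⟩, ⟨y, hy1, hy2⟩, ⟨z, hz1, hz2⟩⟩ := h
  rcases hrel with hss | hss | hss
  · exact ⟨⟨x, hx1.1, hx2⟩, ⟨y, hy1.1, hy2⟩, ⟨z, hz1, fun hz => hz2 ⟨hz, hss hz1⟩⟩⟩
  · exact absurd (hss hy1.2) hy2
  · exact (Set.eq_empty_iff_forall_notMem.1 hss x ⟨hx2, hx1.2⟩).elim

lemma cross_transfer2 {A S0 S : Set V} (hrel : LamRel S S0) (hx : Intersecting A S0)
    (h : Intersecting (A ∪ S0) S) : Intersecting A S := by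
  obtain ⟨⟨x, hx1, hx2⟩, ⟨y, hy1, hy2⟩, ⟨z, hz1, hz2⟩⟩ := h
  obtain ⟨⟨p, hp1, hp2⟩, ⟨q, hq1, hq2⟩, ⟨r, hr1, hr2⟩⟩ := hx
  rcases hrel with hss | hss | hss
  · exact absurd (Or.inr (hss hz1)) hz2
  · refine ⟨⟨p, hp1, hss hp2⟩, ?_, ⟨z, hz1, fun hz => hz2 (Or.inl hz)⟩⟩
    by_contra hcon
    rw [Set.not_nonempty_iff_eq_empty, Set.diff_eq_empty] at hcon
    rcases hy1 with hy | hy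
    · exact hy2 (hcon hy)
    · exact hy2 (hss hy)
  · have hxA : x ∈ A := by
      rcases hx1 with h' | h'
      · exact h'
      · exact (Set.eq_empty_iff_forall_notMem.1 hss x ⟨hx2, h'⟩).elim
    refine ⟨⟨x, hxA, hx2⟩, ?_, ⟨z, hz1, fun hz => hz2 (Or.inl hz)⟩⟩
    by_contra hcon
    rw [Set.not_nonempty_iff_eq_empty, Set.diff_eq_empty] at hcon
    exact Set.eq_empty_iff_forall_notMem.1 hss p ⟨hcon hp1, hp2⟩

lemma cross_transfer3 {A S0 S : Set V} (hrel : LamRel S S0) (hx : Intersecting A S0)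
    (h : Intersecting (A \ S0) S) : Intersecting A S := by
  obtain ⟨⟨x, hx1, hx2⟩, ⟨y, hy1, hy2⟩, ⟨z, hz1, hz2⟩⟩ := h
  obtain ⟨⟨p, hp1, hp2⟩, ⟨q, hq1, hq2⟩, ⟨r, hr1, hr2⟩⟩ := hx
  rcases hrel with hss | hss | hss
  · exact absurd (hss hx2) hx1.2
  · refine ⟨⟨x, hx1.1, hx2⟩, ⟨y, hy1.1, hy2⟩, ?_⟩
    by_contra hcon
    rw [Set.not_nonempty_iff_eq_empty, Set.diff_eq_empty] at hcon
    exact hr2 (hcon (hss hr1))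
  · refine ⟨⟨x, hx1.1, hx2⟩, ⟨y, hy1.1, hy2⟩, ⟨z, hz1, fun hz => ?_⟩⟩
    exact hz2 ⟨hz, fun hz0 => Set.eq_empty_iff_forall_notMem.1 hss z ⟨hz1, hz0⟩⟩

lemma cross_transfer4 {A S0 S : Set V} (hrel : LamRel S S0) (hx : Intersecting A S0)
    (h : Intersecting (S0 \ A) S) : Intersecting A S := by
  obtain ⟨⟨x, hx1, hx2⟩, ⟨y, hy1, hy2⟩, ⟨z, hz1, hz2⟩⟩ := h
  obtain ⟨⟨p, hp1, hp2⟩, ⟨q, hq1, hq2⟩, ⟨r, hr1, hr2⟩⟩ := hx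
  rcases hrel with hss | hss | hss
  · -- S ⊆ S0
    have hzA : z ∈ A := by
      by_contra hzA
      exact hz2 ⟨hss hz1, hzA⟩
    refine ⟨⟨z, hzA, hz1⟩, ?_, ⟨x, hx2, hx1.2⟩⟩
    by_contra hcon
    rw [Set.not_nonempty_iff_eq_empty, Set.diff_eq_empty] at hcon
    exact hq2 (hss (hcon hq1))
  · exact absurd (hss hy1.1) hy2
  · exact (Set.eq_empty_iff_forall_notMem.1 hss x ⟨hx2, hx1.1⟩).elim

lemma lamrel_comm {A B : Set V} (h : LamRel A B) : LamRel B A := by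
  unfold LamRel at *
  rw [Set.inter_comm]
  tauto

lemma chi_mem_span (hpos : ∀ e ∈ G.edgeSet, 0 < c e) {t : V} (ht : t ∈ T)
    (L : Finset (Set V))
    (hLsub : ∀ S ∈ L, IsRoot G T c S ∧ t ∉ S)
    (hLlam : ∀ A ∈ L, ∀ B ∈ L, LamRel A B)
    (hmax : ∀ A, IsRoot G T c A → t ∉ A → (∀ B ∈ L, LamRel A B) → A ∈ L) :
    ∀ n (A : Set V), (L.filter (fun S => Intersecting A S)).card ≤ n →
      IsRoot G T c A → t ∉ A → chi G A ∈ Submodule.span ℝ (chi G '' ↑L) := by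
  intro n
  induction n with
  | zero =>
    intro A hcard hA htA
    by_cases hmem : A ∈ L
    · exact Submodule.subset_span ⟨A, hmem, rfl⟩
    · exfalso
      obtain ⟨S0, hS0L, hxAS0⟩ : ∃ S0 ∈ L, Intersecting A S0 := by
        by_contra hcon
        push_neg at hcon
        exact hmem (hmax A hA htA fun B hB => not_intersecting_iff.1 (hcon B hB))
      have : S0 ∈ L.filter (fun S => Intersecting A S) := Finset.mem_filter.2 ⟨hS0L, hxAS0⟩
      have := Finset.card_pos.2 ⟨S0, this⟩
      omega
  | succ n ih =>
    intro A hcard hA htA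
    by_cases hmem : A ∈ L
    · exact Submodule.subset_span ⟨A, hmem, rfl⟩
    obtain ⟨S0, hS0L, hxAS0⟩ : ∃ S0 ∈ L, Intersecting A S0 := by
      by_contra hcon
      push_neg at hcon
      exact hmem (hmax A hA htA fun B hB => not_intersecting_iff.1 (hcon B hB))
    obtain ⟨hS0root, htS0⟩ := hLsub S0 hS0L
    have hS0span : chi G S0 ∈ Submodule.span ℝ (chi G '' ↑L) :=
      Submodule.subset_span ⟨S0, hS0L, rfl⟩
    have hS0filter : S0 ∈ L.filter (fun S => Intersecting A S) :=
      Finset.mem_filter.2 ⟨hS0L, hxAS0⟩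
    -- generic card decrease
    have hdec : ∀ P : Set V, (∀ S, LamRel S S0 → Intersecting P S → Intersecting A S) →
        ¬ Intersecting P S0 → (L.filter (fun S => Intersecting P S)).card ≤ n := by
      intro P htrans hnPS0
      have hsub : L.filter (fun S => Intersecting P S) ⊆
          (L.filter (fun S => Intersecting A S)).erase S0 := by
        intro S hS
        rw [Finset.mem_filter] at hS
        refine Finset.mem_erase.2 ⟨?_, Finset.mem_filter.2 ⟨hS.1, ?_⟩⟩
        · rintro rfl; exact hnPS0 hS.2
        · exact htrans S (hLlam S hS.1 S0 hS0L) hS.2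
      have := Finset.card_le_card hsub
      have := Finset.card_erase_of_mem hS0filter
      omega
    by_cases hterm : (T ∩ (A ∩ S0)).Nonempty
    · -- use A ∩ S0, A ∪ S0
      have hP : IsSteinerCut T (A ∩ S0) :=
        ⟨hterm, ⟨t, ht, fun h => htA h.1⟩⟩
      have hQ : IsSteinerCut T (A ∪ S0) := by
        obtain ⟨w, hw⟩ := hA.1.1
        exact ⟨⟨w, hw.1, Or.inl hw.2⟩, ⟨t, ht, fun h => h.elim htA htS0⟩⟩
      obtain ⟨hProot, hQroot, hident⟩ := uncross1 G T c hpos hA hS0root hP hQ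
      have h1 : chi G (A ∩ S0) ∈ Submodule.span ℝ (chi G '' ↑L) := by
        refine ih (A ∩ S0) ?_ hProot (fun h => htA h.1)
        refine hdec _ (fun S hrel hint => cross_transfer1 hrel hxAS0 hint) ?_
        rintro ⟨-, ⟨y, hy1, hy2⟩, -⟩
        exact hy2 hy1.2
      have h2 : chi G (A ∪ S0) ∈ Submodule.span ℝ (chi G '' ↑L) := by
        refine ih (A ∪ S0) ?_ hQroot (fun h => h.elim htA htS0)
        refine hdec _ (fun S hrel hint => cross_transfer2 hrel hxAS0 hint) ?_
        rintro ⟨-, -, ⟨z, hz1, hz2⟩⟩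
        exact hz2 (Or.inr hz1)
      have : chi G A = chi G (A ∩ S0) + chi G (A ∪ S0) - chi G S0 := by
        rw [← hident]; abel
      rw [this]
      exact Submodule.sub_mem _ (Submodule.add_mem _ h1 h2) hS0span
    · -- use A \ S0, S0 \ A
      rw [Set.not_nonempty_iff_eq_empty] at hterm
      have hP : IsSteinerCut T (A \ S0) := by
        obtain ⟨w, hw⟩ := hA.1.1
        have : w ∉ S0 := fun h => Set.eq_empty_iff_forall_notMem.1 hterm w ⟨hw.1, hw.2, h⟩
        exact ⟨⟨w, hw.1, hw.2, this⟩, ⟨t, ht, fun h => htA h.1⟩⟩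
      have hQ : IsSteinerCut T (S0 \ A) := by
        obtain ⟨w, hw⟩ := hS0root.1.1
        have : w ∉ A := fun h => Set.eq_empty_iff_forall_notMem.1 hterm w ⟨hw.1, h, hw.2⟩
        exact ⟨⟨w, hw.1, hw.2, this⟩, ⟨t, ht, fun h => htS0 h.1⟩⟩
      obtain ⟨hProot, hQroot, hident⟩ := uncross2 G T c hpos hA hS0root hP hQ
      have h1 : chi G (A \ S0) ∈ Submodule.span ℝ (chi G '' ↑L) := by
        refine ih (A \ S0) ?_ hProot (fun h => htA h.1)
        refine hdec _ (fun S hrel hint => cross_transfer3 hrel hxAS0 hint) ?_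
        rintro ⟨⟨x, hx1, hx2⟩, -, -⟩
        exact hx1.2 hx2
      have h2 : chi G (S0 \ A) ∈ Submodule.span ℝ (chi G '' ↑L) := by
        refine ih (S0 \ A) ?_ hQroot (fun h => htS0 h.1)
        refine hdec _ (fun S hrel hint => cross_transfer4 hrel hxAS0 hint) ?_
        rintro ⟨-, ⟨y, hy1, hy2⟩, -⟩
        exact hy2 hy1.1
      have : chi G A = chi G (A \ S0) + chi G (S0 \ A) - chi G S0 := by
        rw [← hident]; abel
      rw [this]
      exact Submodule.sub_mem _ (Submodule.add_mem _ h1 h2) hS0span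

lemma exists_laminar_spanning (hfw : FacetWeights G T c) {t : V} (ht : t ∈ T) :
    ∃ L : Finset (Set V), (∀ S ∈ L, IsRoot G T c S ∧ t ∉ S) ∧
      (∀ A ∈ L, ∀ B ∈ L, LamRel A B) ∧
      Submodule.span ℝ (chi G '' ↑L) = ⊤ := by
  obtain ⟨hpos, -, hspan⟩ := hfw
  set Rt : Finset (Set V) := (Set.toFinite {S : Set V | IsRoot G T c S ∧ t ∉ S}).toFinset with hRt
  have hRtmem : ∀ S, S ∈ Rt ↔ IsRoot G T c S ∧ t ∉ S := by
    intro S; rw [hRt, Set.Finite.mem_toFinset]; rfl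
  set cands : Finset (Finset (Set V)) :=
    Rt.powerset.filter (fun L => ∀ A ∈ L, ∀ B ∈ L, LamRel A B) with hcands
  have hne : cands.Nonempty := ⟨∅, by simp [hcands]⟩
  obtain ⟨L, hLmem, hLmax⟩ := Finset.exists_max_image cands Finset.card hne
  rw [hcands, Finset.mem_filter, Finset.mem_powerset] at hLmem
  obtain ⟨hLsub', hLlam⟩ := hLmem
  have hLsub : ∀ S ∈ L, IsRoot G T c S ∧ t ∉ S := fun S hS => (hRtmem S).1 (hLsub' hS)
  have hmax : ∀ A, IsRoot G T c A → t ∉ A → (∀ B ∈ L, LamRel A B) → A ∈ L := by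
    intro A hA htA hrel
    by_contra hcon
    have hins : insert A L ∈ cands := by
      rw [hcands, Finset.mem_filter, Finset.mem_powerset]
      constructor
      · exact Finset.insert_subset ((hRtmem A).2 ⟨hA, htA⟩) hLsub'
      · intro X hX Y hY
        rw [Finset.mem_insert] at hX hY
        rcases hX with rfl | hX <;> rcases hY with rfl | hY
        · exact Or.inl le_rfl
        · exact hrel Y hY
        · exact lamrel_comm (hrel X hX)
        · exact hLlam X hX Y hY
    have := hLmax _ hins
    rw [Finset.card_insert_of_notMem hcon] at this
    omega
  refine ⟨L, hLsub, hLlam, ?_⟩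
  rw [eq_top_iff, ← hspan]
  rw [Submodule.span_le]
  rintro x ⟨S, hS, rfl⟩
  have hSroot : IsRoot G T c S := hS
  by_cases htS : t ∈ S
  · rw [← chi_compl]
    exact chi_mem_span G T c hpos ht L hLsub hLlam hmax
      (L.filter (fun S' => Intersecting Sᶜ S')).card Sᶜ le_rfl
      (isroot_compl G T c hSroot) (fun h => h htS)
  · exact chi_mem_span G T c hpos ht L hLsub hLlam hmax
      (L.filter (fun S' => Intersecting S S')).card S le_rfl hSroot htS

lemma exists_neighbor (hconn : G.Connected) (h2 : 2 ≤ Fintype.card V) (u : V) :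
    ∃ w, G.Adj u w := by
  obtain ⟨v, hv⟩ := Fintype.exists_ne_of_one_lt_card (by omega) u
  obtain ⟨p⟩ := hconn.preconnected u v
  exact ⟨p.getVert 1, p.adj_snd (SimpleGraph.Walk.not_nil_of_ne (Ne.symm hv))⟩

lemma minimal_member_singleton (hconn : G.Connected) (h2 : 2 ≤ Fintype.card V)
    (hpos : ∀ e ∈ G.edgeSet, 0 < c e) {t : V}
    (L : Finset (Set V))
    (hLsub : ∀ S ∈ L, IsRoot G T c S ∧ t ∉ S)
    (hLlam : ∀ A ∈ L, ∀ B ∈ L, LamRel A B)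
    (hspanL : Submodule.span ℝ (chi G '' ↑L) = ⊤)
    {M : Set V} (hM : M ∈ L) (hmin : ∀ S ∈ L, ¬ S ⊂ M) :
    ∃ v, v ∈ T ∧ v ≠ t ∧ M = {v} := by
  obtain ⟨hMroot, htM⟩ := hLsub M hM
  -- no internal edges
  have hnoint : ∀ a b : V, a ∈ M → b ∈ M → ¬ G.Adj a b := by
    intro a b ha hb hadj
    set e : ↥G.edgeSet := ⟨s(a, b), (G.mem_edgeSet).2 hadj⟩ with he
    have hzero : ∀ S ∈ (L : Set (Set V)), chi G S e = 0 := by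
      intro S hS
      have hrel : LamRel S M := hLlam S hS M hM
      have hor : M ⊆ S ∨ S ∩ M = ∅ := by
        rcases hrel with h | h | h
        · rcases Set.eq_or_ssubset_of_subset h with rfl | hss
          · exact Or.inl le_rfl
          · exact absurd hss (hmin S hS)
        · exact Or.inl h
        · exact Or.inr h
      show (if InCut S e.val then (1:ℝ) else 0) = 0
      rw [if_neg]
      show ¬ InCut S s(a, b)
      rw [incut_iff]
      push_neg
      rcases hor with hMS | hdisj
      · exact ⟨fun _ => hMS hb, fun _ => hMS ha⟩
      · constructor
        · intro haS
          exact (Set.eq_empty_iff_forall_notMem.1 hdisj a ⟨haS, ha⟩).elim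
        · intro hbS
          exact (Set.eq_empty_iff_forall_notMem.1 hdisj b ⟨hbS, hb⟩).elim
    have hker : Submodule.span ℝ (chi G '' ↑L) ≤ LinearMap.ker (LinearMap.proj (R := ℝ)
        (φ := fun _ : ↥G.edgeSet => ℝ) e) := by
      rw [Submodule.span_le]
      rintro x ⟨S, hS, rfl⟩
      exact hzero S hS
    rw [hspanL] at hker
    have h1 : (fun _ : ↥G.edgeSet => (1:ℝ)) ∈ LinearMap.ker (LinearMap.proj (R := ℝ)
        (φ := fun _ : ↥G.edgeSet => ℝ) e) := hker Submodule.mem_top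
    simp [LinearMap.mem_ker] at h1
  -- M is a subsingleton
  have hsub : M.Subsingleton := by
    rw [← Set.not_nontrivial_iff]
    intro hcon
    obtain ⟨x, hx, y, hy, hxy⟩ := hcon
    obtain ⟨t', ht'T, ht'M⟩ := hMroot.1.1
    set u : V := if x = t' then y else x with hu
    have huM : u ∈ M := by rw [hu]; split <;> assumption
    have hut' : u ≠ t' := by
      rw [hu]; split
      · rename_i h; rw [← h]; exact Ne.symm hxy
      · assumption
    obtain ⟨w, hadj⟩ := exists_neighbor G hconn h2 u
    have hwM : w ∉ M := fun hw => hnoint u w huM hw hadj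
    have hsteiner : IsSteinerCut T (M \ {u}) := by
      refine ⟨⟨t', ht'T, ht'M, fun h => hut' (Set.mem_singleton_iff.1 h).symm⟩, ?_⟩
      obtain ⟨r, hr⟩ := hMroot.1.2
      exact ⟨r, hr.1, fun h => hr.2 h.1⟩
    have hlt : cutWeight G c (M \ {u}) < cutWeight G c M := by
      apply Finset.sum_lt_sum
      · intro e he
        have hce : 0 < c e := hpos e (SimpleGraph.mem_edgeFinset.1 he)
        have himp : InCut (M \ {u}) e → InCut M e := by
          have hadj' : e ∈ G.edgeSet := SimpleGraph.mem_edgeFinset.1 he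
          induction e using Sym2.inductionOn with
          | hf a b =>
            intro hcut
            have hab : G.Adj a b := (G.mem_edgeSet).1 hadj'
            rw [incut_iff] at hcut ⊢
            rcases hcut with ⟨h1, h2⟩ | ⟨h1, h2⟩
            · refine Or.inl ⟨h1.1, fun hbM => ?_⟩
              rcases Classical.em (b = u) with heq | hne
              · exact hnoint a u h1.1 huM (by rwa [heq] at hab)
              · exact h2 ⟨hbM, hne⟩
            · refine Or.inr ⟨h1.1, fun haM => ?_⟩
              rcases Classical.em (a = u) with heq | hne
              · exact hnoint u b huM h1.1 (by rwa [heq] at hab)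
              · exact h2 ⟨haM, hne⟩
        by_cases h1 : InCut (M \ {u}) e
        · rw [if_pos h1, if_pos (himp h1)]
        · rw [if_neg h1]
          split
          · exact hce.le
          · exact le_refl 0
      · refine ⟨s(u, w), SimpleGraph.mem_edgeFinset.2 ((G.mem_edgeSet).2 hadj), ?_⟩
        rw [if_neg, if_pos]
        · exact hpos _ ((G.mem_edgeSet).2 hadj)
        · rw [incut_iff]; exact Or.inl ⟨huM, hwM⟩
        · rw [incut_iff]
          push_neg
          exact ⟨fun h => absurd rfl h.2, fun h => (hwM h.1).elim⟩
    exact absurd (hMroot.2 (M \ {u}) hsteiner) (not_le.2 hlt)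
  obtain ⟨t', ht'T, ht'M⟩ := hMroot.1.1
  exact ⟨t', ht'T, fun h => htM (h ▸ ht'M), hsub.eq_singleton_of_mem ht'M⟩

end Aux

section Count
variable {V : Type*} [Fintype V]
set_option linter.unusedSectionVars false

/-- maximal members -/
noncomputable def mxF (L : Finset (Set V)) : Finset (Set V) :=
  L.filter (fun M => ∀ S ∈ L, ¬ M ⊂ S)

/-- minimal members -/
noncomputable def mnF (L : Finset (Set V)) : Finset (Set V) :=
  L.filter (fun M => ∀ S ∈ L, ¬ S ⊂ M)

lemma laminar_count (L : Finset (Set V)) (hne : ∀ S ∈ L, S.Nonempty)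
    (hlam : ∀ A ∈ L, ∀ B ∈ L, LamRel A B) :
    L.card + (mxF L).card ≤ (⋃₀ (L : Set (Set V))).ncard + (mnF L).card := by
  induction L using Finset.strongInduction with
  | _ L ih =>
  rcases L.eq_empty_or_nonempty with rfl | hLne
  · simp [mxF, mnF]
  obtain ⟨M, hM, hMmax'⟩ := Finset.exists_max_image L (fun S => S.ncard) hLne
  have hMmax : ∀ S ∈ L, ¬ M ⊂ S := by
    intro S hS hss
    exact absurd (hMmax' S hS) (not_le.2 (Set.ncard_lt_ncard hss (Set.toFinite S)))
  have hMmx : M ∈ mxF L := Finset.mem_filter.2 ⟨hM, hMmax⟩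
  set L' := L.erase M with hL'
  have hL'ss : L' ⊂ L := Finset.erase_ssubset hM
  have hL'mem : ∀ S, S ∈ L' ↔ S ∈ L ∧ S ≠ M := by
    intro S; rw [hL', Finset.mem_erase]; tauto
  have hcardL : L.card = L'.card + 1 := by
    rw [hL', Finset.card_erase_of_mem hM]
    have := Finset.card_pos.2 hLne
    omega
  have ihL' := ih L' hL'ss (fun S hS => hne S ((hL'mem S).1 hS).1)
    (fun A hA B hB => hlam A ((hL'mem A).1 hA).1 B ((hL'mem B).1 hB).1)
  -- minimal members of L' = minimal members of L minus M
  have hmnF : mnF L' = (mnF L).erase M := by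
    ext S
    rw [Finset.mem_erase, mnF, mnF, Finset.mem_filter, Finset.mem_filter, hL'mem]
    constructor
    · rintro ⟨⟨hSL, hSM⟩, hminS⟩
      refine ⟨hSM, hSL, fun S' hS' hss => ?_⟩
      rcases Classical.em (S' = M) with rfl | hne'
      · exact hMmax S hSL hss
      · exact hminS S' ((hL'mem S').2 ⟨hS', hne'⟩) hss
    · rintro ⟨hSM, hSL, hminS⟩
      exact ⟨⟨hSL, hSM⟩, fun S' hS' => hminS S' ((hL'mem S').1 hS').1⟩
  -- maximal members of L minus M are maximal in L'
  have hmxsub : (mxF L).erase M ⊆ mxF L' := by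
    intro S hS
    rw [Finset.mem_erase, mxF, Finset.mem_filter] at hS
    exact Finset.mem_filter.2 ⟨(hL'mem S).2 ⟨hS.2.1, hS.1⟩,
      fun S' hS' => hS.2.2 S' ((hL'mem S').1 hS').1⟩
  -- if M is not minimal, a maximal proper submember of it is maximal in L'
  have hchild : ∀ x ∈ M, ∀ D ∈ L', x ∈ D → ∃ C, C ∈ mxF L' ∧ C ⊂ M ∧ x ∈ C := by
    intro x hxM D hD hxD
    set P := L'.filter (fun S => S ⊂ M ∧ x ∈ S) with hP
    have hDM : D ⊂ M := by
      obtain ⟨hDL, hDne⟩ := (hL'mem D).1 hD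
      rcases hlam D hDL M hM with h | h | h
      · exact Set.ssubset_iff_subset_ne.2 ⟨h, hDne⟩
      · rcases Set.eq_or_ssubset_of_subset h with rfl | hss
        · exact absurd rfl hDne
        · exact absurd hss (hMmax D hDL)
      · exact (Set.eq_empty_iff_forall_notMem.1 h x ⟨hxD, hxM⟩).elim
    have hPne : P.Nonempty := ⟨D, Finset.mem_filter.2 ⟨hD, hDM, hxD⟩⟩
    obtain ⟨C, hC, hCmax⟩ := Finset.exists_max_image P (fun S => S.ncard) hPne
    rw [hP, Finset.mem_filter] at hC
    refine ⟨C, Finset.mem_filter.2 ⟨hC.1, ?_⟩, hC.2.1, hC.2.2⟩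
    intro D' hD' hss
    obtain ⟨hD'L, hD'ne⟩ := (hL'mem D').1 hD'
    have hD'M : D' ⊂ M := by
      rcases hlam D' hD'L M hM with h | h | h
      · exact Set.ssubset_iff_subset_ne.2 ⟨h, hD'ne⟩
      · rcases Set.eq_or_ssubset_of_subset h with rfl | hss'
        · exact absurd rfl hD'ne
        · exact absurd hss' (hMmax D' hD'L)
      · exact (Set.eq_empty_iff_forall_notMem.1 h x ⟨hss.1 hC.2.2, hC.2.1.1 hC.2.2⟩).elim
    have : D' ∈ P := Finset.mem_filter.2 ⟨hD', hD'M, hss.1 hC.2.2⟩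
    exact absurd (hCmax D' this) (not_le.2 (Set.ncard_lt_ncard hss (Set.toFinite D')))
  by_cases hpriv : (M \ ⋃₀ (L' : Set (Set V))).Nonempty
  · -- removing M shrinks the union
    obtain ⟨x, hxM, hxU⟩ := hpriv
    have hUss : ⋃₀ (L' : Set (Set V)) ⊂ ⋃₀ (L : Set (Set V)) := by
      constructor
      · exact Set.sUnion_subset_sUnion (by exact_mod_cast Finset.coe_subset.2 hL'ss.1)
      · intro hsub
        exact hxU (hsub ⟨M, by exact_mod_cast hM, hxM⟩)
    have hU : (⋃₀ (L' : Set (Set V))).ncard + 1 ≤ (⋃₀ (L : Set (Set V))).ncard :=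
      Set.ncard_lt_ncard hUss (Set.toFinite _)
    by_cases hMmin : M ∈ mnF L
    · -- M minimal: mn count drops by one
      have h1 : (mnF L').card + 1 = (mnF L).card := by
        rw [hmnF, Finset.card_erase_of_mem hMmin]
        have := Finset.card_pos.2 ⟨M, hMmin⟩
        omega
      have h2 : (mxF L).card ≤ (mxF L').card + 1 := by
        have := Finset.card_le_card hmxsub
        rw [Finset.card_erase_of_mem hMmx] at this
        omega
      omega
    · -- M not minimal: mx count does not drop
      have hMnotmin : ∃ S ∈ L, S ⊂ M := by
        by_contra hcon
        push_neg at hcon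
        exact hMmin (Finset.mem_filter.2 ⟨hM, hcon⟩)
      obtain ⟨S0, hS0L, hS0M⟩ := hMnotmin
      obtain ⟨y, hyS0⟩ := hne S0 hS0L
      have hS0L' : S0 ∈ L' := (hL'mem S0).2 ⟨hS0L, fun h => absurd (h ▸ hS0M) (lt_irrefl M)⟩
      obtain ⟨C, hCmx, hCM, -⟩ := hchild y (hS0M.1 hyS0) S0 hS0L' hyS0
      have hCnotmx : C ∉ (mxF L).erase M := by
        rw [Finset.mem_erase, mxF, Finset.mem_filter]
        rintro ⟨-, -, hmax⟩
        exact hmax M hM hCM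
      have h2 : (mxF L).card ≤ (mxF L').card := by
        have hsub2 : insert C ((mxF L).erase M) ⊆ mxF L' :=
          Finset.insert_subset hCmx hmxsub
        have := Finset.card_le_card hsub2
        rw [Finset.card_insert_of_notMem hCnotmx, Finset.card_erase_of_mem hMmx] at this
        have := Finset.card_pos.2 ⟨M, hMmx⟩
        omega
      have h1 : (mnF L').card = (mnF L).card := by
        rw [hmnF, Finset.erase_eq_of_notMem hMmin]
      omega
  · -- M covered by proper submembers: two new maximal members appear
    rw [Set.not_nonempty_iff_eq_empty, Set.diff_eq_empty] at hpriv
    have hU : ⋃₀ (L : Set (Set V)) = ⋃₀ (L' : Set (Set V)) := by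
      apply Set.Subset.antisymm
      · intro z hz
        obtain ⟨S, hS, hzS⟩ := hz
        rcases Classical.em (S = M) with rfl | hne'
        · exact hpriv hzS
        · exact ⟨S, by exact_mod_cast (hL'mem S).2 ⟨by exact_mod_cast hS, hne'⟩, hzS⟩
      · exact Set.sUnion_subset_sUnion (by exact_mod_cast Finset.coe_subset.2 hL'ss.1)
    -- M is not minimal
    obtain ⟨m0, hm0⟩ := hne M hM
    have hm0' := hpriv hm0
    obtain ⟨D, hD, hm0D⟩ := hm0'
    have hDL' : D ∈ L' := by exact_mod_cast hD
    obtain ⟨C, hCmx, hCM, hm0C⟩ := hchild m0 hm0 D hDL' hm0D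
    -- a point of M outside C gives a second maximal member
    obtain ⟨x, hxM, hxC⟩ := Set.exists_of_ssubset hCM
    obtain ⟨D2, hD2, hxD2⟩ := hpriv hxM
    have hD2L' : D2 ∈ L' := by exact_mod_cast hD2
    obtain ⟨C2, hC2mx, hC2M, hxC2⟩ := hchild x hxM D2 hD2L' hxD2
    have hCC2 : C ≠ C2 := fun h => hxC (h ▸ hxC2)
    have hCnotmx : C ∉ (mxF L).erase M := by
      rw [Finset.mem_erase, mxF, Finset.mem_filter]
      rintro ⟨-, -, hmax⟩
      exact hmax M hM hCM
    have hC2notmx : C2 ∉ (mxF L).erase M := by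
      rw [Finset.mem_erase, mxF, Finset.mem_filter]
      rintro ⟨-, -, hmax⟩
      exact hmax M hM hC2M
    have h2 : (mxF L).card + 1 ≤ (mxF L').card := by
      have hsub2 : insert C (insert C2 ((mxF L).erase M)) ⊆ mxF L' :=
        Finset.insert_subset hCmx (Finset.insert_subset hC2mx hmxsub)
      have := Finset.card_le_card hsub2
      rw [Finset.card_insert_of_notMem, Finset.card_insert_of_notMem hC2notmx,
        Finset.card_erase_of_mem hMmx] at this
      · have := Finset.card_pos.2 ⟨M, hMmx⟩
        omega
      · rw [Finset.mem_insert]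
        rintro (h | h)
        · exact hCC2 h
        · exact hCnotmx h
    have hMnotmin : M ∉ mnF L := by
      rw [mnF, Finset.mem_filter]
      rintro ⟨-, hmin⟩
      obtain ⟨Cl, hCl⟩ := Finset.mem_filter.1 hCmx
      exact hmin C ((hL'mem C).1 (Finset.mem_filter.1 hCmx).1).1 hCM
    have h1 : (mnF L').card = (mnF L).card := by
      rw [hmnF, Finset.erase_eq_of_notMem hMnotmin]
    rw [hU]
    omega

end Count


section Main
variable {V : Type*} [Fintype V] [DecidableEq V]

theorem irreducible_edge_bound' (G : SimpleGraph V) (hconn : G.Connected) (T : Set V)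
    (hT : 3 ≤ T.ncard) (hfacet : ∃ c : Sym2 V → ℤ, FacetWeights G T c) :
    G.edgeFinset.card ≤ Fintype.card V + T.ncard - 3 := by
  obtain ⟨c, hfw⟩ := hfacet
  have hpos := hfw.1
  have hTV : T.ncard ≤ Fintype.card V := by
    have := Set.ncard_le_ncard (Set.subset_univ T) Set.finite_univ
    rwa [Set.ncard_univ, Nat.card_eq_fintype_card] at this
  have hV3 : 3 ≤ Fintype.card V := le_trans hT hTV
  haveI : Nonempty V := Fintype.card_pos_iff.1 (by omega)
  obtain ⟨t, ht⟩ : T.Nonempty := Set.nonempty_of_ncard_ne_zero (by omega)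
  obtain ⟨L, hLsub, hLlam, hspanL⟩ := exists_laminar_spanning G T c hfw ht
  have hrank : G.edgeFinset.card ≤ L.card := by
    haveI : Fintype ↥(chi G '' (L : Set (Set V))) := Fintype.ofFinite _
    have h1 := finrank_span_le_card (R := ℝ) (chi G '' (L : Set (Set V)))
    rw [hspanL, finrank_top, Module.finrank_fintype_fun_eq_card] at h1
    rw [SimpleGraph.edgeFinset_card]
    calc Fintype.card ↥G.edgeSet ≤ (chi G '' (L : Set (Set V))).toFinset.card := h1
    _ = (chi G '' (L : Set (Set V))).ncard := (Set.ncard_eq_toFinset_card' _).symm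
    _ ≤ ((L : Set (Set V))).ncard := Set.ncard_image_le (Set.toFinite _)
    _ = L.card := Set.ncard_coe_finset L
  rcases L.eq_empty_or_nonempty with rfl | hLne
  · rw [Finset.card_empty] at hrank
    omega
  -- a maximal member exists
  obtain ⟨M0, hM0, hM0max'⟩ := Finset.exists_max_image L (fun S => S.ncard) hLne
  have hM0mx : M0 ∈ mxF L := Finset.mem_filter.2 ⟨hM0, fun S hS hss =>
    absurd (hM0max' S hS) (not_le.2 (Set.ncard_lt_ncard hss (Set.toFinite S)))⟩
  have hmx1 : 1 ≤ (mxF L).card := Finset.card_pos.2 ⟨M0, hM0mx⟩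
  have hcount := laminar_count L (fun S hS => by
      obtain ⟨x, hx⟩ := (hLsub S hS).1.1.1
      exact ⟨x, hx.2⟩) hLlam
  -- minimal members inject into T \ {t}
  have hmn : (mnF L).card + 1 ≤ T.ncard := by
    set Tf := (Set.toFinite T).toFinset with hTfdef
    have hTf : Tf.card = T.ncard := by
      rw [Set.ncard_eq_toFinset_card T (Set.toFinite T)]
    have hsub : (mnF L).card ≤ (Tf.erase t).card := by
      apply Finset.card_le_card_of_injOn (fun M => Classical.epsilon (· ∈ M))
      · intro M hM
        obtain ⟨hML, hMmin⟩ := Finset.mem_filter.1 hM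
        obtain ⟨v, hvT, hvt, rfl⟩ := minimal_member_singleton G T c hconn (by omega) hpos L
          hLsub hLlam hspanL hML hMmin
        have heps : Classical.epsilon (· ∈ ({v} : Set V)) = v :=
          Classical.epsilon_spec (⟨v, rfl⟩ : ∃ x, x ∈ ({v} : Set V))
        simp only [heps]
        exact Finset.mem_erase.2 ⟨hvt, (Set.Finite.mem_toFinset _).2 hvT⟩
      · intro M hM M' hM' heq
        obtain ⟨hML, hMmin⟩ := Finset.mem_filter.1 hM
        obtain ⟨v, hvT, hvt, rfl⟩ := minimal_member_singleton G T c hconn (by omega) hpos L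
          hLsub hLlam hspanL hML hMmin
        obtain ⟨hML', hMmin'⟩ := Finset.mem_filter.1 hM'
        obtain ⟨v', hvT', hvt', rfl⟩ := minimal_member_singleton G T c hconn (by omega) hpos L
          hLsub hLlam hspanL hML' hMmin'
        have heps : Classical.epsilon (· ∈ ({v} : Set V)) = v :=
          Classical.epsilon_spec (⟨v, rfl⟩ : ∃ x, x ∈ ({v} : Set V))
        have heps' : Classical.epsilon (· ∈ ({v'} : Set V)) = v' :=
          Classical.epsilon_spec (⟨v', rfl⟩ : ∃ x, x ∈ ({v'} : Set V))
        simp only [heps, heps'] at heq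
        rw [heq]
    have herase : (Tf.erase t).card = Tf.card - 1 :=
      Finset.card_erase_of_mem ((Set.Finite.mem_toFinset _).2 ht)
    omega
  -- the union avoids t
  have hU : (⋃₀ (L : Set (Set V))).ncard + 1 ≤ Fintype.card V := by
    have hsub : ⋃₀ (L : Set (Set V)) ⊆ ({t}ᶜ : Set V) := by
      rintro x ⟨S, hS, hxS⟩ hxt
      rw [Set.mem_singleton_iff] at hxt
      exact (hLsub S (by exact_mod_cast hS)).2 (hxt ▸ hxS)
    have h1 : (⋃₀ (L : Set (Set V))).ncard ≤ ({t}ᶜ : Set V).ncard :=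
      Set.ncard_le_ncard hsub (Set.toFinite _)
    have h2 := Set.ncard_add_ncard_compl ({t} : Set V) (Set.toFinite _)
    rw [Set.ncard_singleton, Nat.card_eq_fintype_card] at h2
    omega
  omega

end Main

/-- Every irreducible facet inducing Steiner graph `(G, T)` with `|T| ≥ 3` satisfies
`|E(G)| ≤ |V(G)| + |T| − 3`. -/
theorem irreducible_edge_bound {V : Type*} [Fintype V] [DecidableEq V]
    (G : SimpleGraph V) (hconn : G.Connected) (T : Set V) (hT : 3 ≤ T.ncard)
    (hfacet : ∃ c : Sym2 V → ℤ, FacetWeights G T c)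
    (hnocut : ∀ w : V, (G.induce ({w}ᶜ : Set V)).Connected)
    (hnodeg2 : ∀ x : V, x ∉ T → G.degree x ≠ 2) :
    G.edgeFinset.card ≤ Fintype.card V + T.ncard - 3 :=
  irreducible_edge_bound' G hconn T hT hfacet
end
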